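/- arXiv:2503.00759 — 6 statements merged into one kernel-verified Lean document; each statement's English description precedes it below -/
import Mathlib

section
/- Let G be a group and suppose there exists a ∈ G such that the index of the centralizer of a in G is greater than 3, i.e., (Subgroup.centralizer {a}).index > 3. Then the endomorphism graph Endo(G) contains a clique on 5 vertices: there exists a finite set s ⊆ G with (Endo(G)).IsNClique 5 s. (In particular, Endo(G) contains K₅ as a subgraph and is hence non-planar.) -/
/-- The endomorphism graph of a group `G`: distinct `a b` are adjacent iff some group
endomorphism maps `a` to `b` or `b` to `a`. -/
def endoGraph (G : Type*) [Group G] : SimpleGraph G :=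
  SimpleGraph.fromRel (fun a b => ∃ f : G →* G, f a = b)

/-- If some element `a` of a group `G` has centralizer of index greater than `3`, then the
endomorphism graph of `G` contains a clique on 5 vertices (hence a `K₅`). -/
theorem endoGraph_isNClique_five_of_centralizer_index (G : Type*) [Group G] (a : G)
    (h : (Subgroup.centralizer {a}).index > 3) :
    ∃ s : Finset G, (endoGraph G).IsNClique 5 s := by
  classical
  set H := Subgroup.centralizer ({a} : Set G) with hH
  -- a is not 1
  have ha : a ≠ 1 := by
    rintro rfl
    have : H = ⊤ := by
      ext x
      simp [hH, Subgroup.mem_centralizer_singleton_iff]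
    rw [this, Subgroup.index_top] at h
    omega
  -- the quotient is finite with card > 3
  have hcard : 3 < Nat.card (G ⧸ H) := h
  have hfin : Finite (G ⧸ H) := Nat.finite_of_card_ne_zero (by omega)
  have : Fintype (G ⧸ H) := Fintype.ofFinite _
  -- the conjugation map from the quotient
  let ψ : G ⧸ H → G := fun q => q.out * a * q.out⁻¹
  have hψinj : Function.Injective ψ := by
    intro p q hpq
    have hpq' : p.out * a * p.out⁻¹ = q.out * a * q.out⁻¹ := hpq
    have hcomm : a * (p.out⁻¹ * q.out) = (p.out⁻¹ * q.out) * a := by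
      calc a * (p.out⁻¹ * q.out) = p.out⁻¹ * (p.out * a * p.out⁻¹) * q.out := by group
        _ = p.out⁻¹ * (q.out * a * q.out⁻¹) * q.out := by rw [hpq']
        _ = (p.out⁻¹ * q.out) * a := by group
    have hmem : p.out⁻¹ * q.out ∈ H :=
      Subgroup.mem_centralizer_singleton_iff.mpr hcomm.symm
    have := (QuotientGroup.eq (s := H)).mpr hmem
    rwa [QuotientGroup.out_eq', QuotientGroup.out_eq'] at this
  have hψne1 : ∀ q : G ⧸ H, ψ q ≠ 1 := by
    intro q hq
    apply ha
    have hq' : q.out * a * q.out⁻¹ = 1 := hq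
    have : a = q.out⁻¹ * (q.out * a * q.out⁻¹) * q.out := by group
    rw [hq'] at this
    simpa using this
  -- pick 4 distinct quotient elements
  obtain ⟨t, -, ht4⟩ : ∃ t ⊆ (Finset.univ : Finset (G ⧸ H)), t.card = 4 :=
    Finset.exists_subset_card_eq (by rw [Finset.card_univ, ← Nat.card_eq_fintype_card]; omega)
  refine ⟨insert 1 (t.image ψ), ?_, ?_⟩
  · -- clique
    intro x hx y hy hxy
    have key : ∀ x y : G, x ≠ y → (∃ g : G, x = g * a * g⁻¹) → (∃ g : G, y = g * a * g⁻¹) →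
        (endoGraph G).Adj x y := by
      rintro x y hxy ⟨g, rfl⟩ ⟨k, rfl⟩
      refine ⟨hxy, Or.inl ⟨(MulAut.conj (k * g⁻¹)).toMonoidHom, ?_⟩⟩
      simp [MulAut.conj_apply]
      group
    have adj1 : ∀ x : G, x ≠ 1 → (endoGraph G).Adj x 1 := by
      intro x hx
      exact ⟨hx, Or.inl ⟨1, rfl⟩⟩
    simp only [Finset.coe_insert, Set.mem_insert_iff, Finset.coe_image, Set.mem_image] at hx hy
    rcases hx with rfl | ⟨p, -, rfl⟩
    · rcases hy with rfl | ⟨q, -, rfl⟩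
      · exact absurd rfl hxy
      · exact ((adj1 _ (hψne1 q)).symm)
    · rcases hy with rfl | ⟨q, -, rfl⟩
      · exact adj1 _ (hψne1 p)
      · exact key _ _ hxy ⟨p.out, rfl⟩ ⟨q.out, rfl⟩
  · -- card
    rw [Finset.card_insert_of_notMem, Finset.card_image_of_injective _ hψinj, ht4]
    simp only [Finset.mem_image, not_exists]
    rintro q ⟨-, hq⟩
    exact hψne1 q hq
end

section
/- Let G be an abelian group containing an element a with orderOf a > 4. Then the endomorphism graph Endo(G) contains a clique on 5 vertices: there exists a finite set s ⊆ G with (Endo(G)).IsNClique 5 s (for instance s = {e, a, a⁻¹, a², a⁻²}). In particular, Endo(G) contains K₅ as a subgraph and is hence non-planar. -/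
/-- If an abelian group `G` has an element of order greater than `4`, then its endomorphism
graph contains a clique on 5 vertices (hence a `K₅`). -/
theorem endoGraph_isNClique_five_of_orderOf_gt_four (G : Type*) [CommGroup G] (a : G)
    (h : orderOf a > 4) :
    ∃ s : Finset G, (endoGraph G).IsNClique 5 s := by
  classical
  -- distinctness of small powers
  have hne : ∀ i j : ℤ, -2 ≤ i → i ≤ 2 → -2 ≤ j → j ≤ 2 → i ≠ j → a ^ i ≠ a ^ j := by
    intro i j hi1 hi2 hj1 hj2 hij heq
    have h1 : a ^ (i - j) = 1 := by
      rw [zpow_sub, heq, mul_inv_cancel]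
    have h2 : (orderOf a : ℤ) ∣ (i - j) := orderOf_dvd_iff_zpow_eq_one.mpr h1
    have h3 : i - j ≠ 0 := sub_ne_zero.mpr hij
    have h4 : (orderOf a : ℤ) ≤ |i - j| := Int.le_of_dvd (abs_pos.mpr h3) ((dvd_abs _ _).mpr h2)
    have h5 : |i - j| ≤ 4 := by
      rw [abs_le]; omega
    omega
  -- adjacency helpers
  have adjL : ∀ (x y : G) (k : ℤ), x ≠ y → x ^ k = y → (endoGraph G).Adj x y := by
    intro x y k hxy hk
    exact ⟨hxy, Or.inl ⟨zpowGroupHom k, hk⟩⟩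
  have adjR : ∀ (x y : G) (k : ℤ), x ≠ y → y ^ k = x → (endoGraph G).Adj x y := by
    intro x y k hxy hk
    exact ⟨hxy, Or.inr ⟨zpowGroupHom k, hk⟩⟩
  refine ⟨{a ^ (0:ℤ), a ^ (1:ℤ), a ^ (-1:ℤ), a ^ (2:ℤ), a ^ (-2:ℤ)}, ?_, ?_⟩
  · intro x hx y hy hxy
    simp only [Finset.coe_insert, Set.mem_insert_iff, Finset.coe_singleton,
      Set.mem_singleton_iff] at hx hy
    rcases hx with rfl | rfl | rfl | rfl | rfl <;>
      rcases hy with rfl | rfl | rfl | rfl | rfl <;>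
      first
        | exact absurd rfl hxy
        | (refine adjL _ _ 0 hxy ?_; rw [← zpow_mul]; norm_num; done)
        | (refine adjR _ _ 0 hxy ?_; rw [← zpow_mul]; norm_num; done)
        | (refine adjL _ _ 1 hxy ?_; rw [← zpow_mul]; norm_num; done)
        | (refine adjR _ _ 1 hxy ?_; rw [← zpow_mul]; norm_num; done)
        | (refine adjL _ _ (-1) hxy ?_; rw [← zpow_mul]; norm_num; done)
        | (refine adjR _ _ (-1) hxy ?_; rw [← zpow_mul]; norm_num; done)
        | (refine adjL _ _ 2 hxy ?_; rw [← zpow_mul]; norm_num; done)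
        | (refine adjR _ _ 2 hxy ?_; rw [← zpow_mul]; norm_num; done)
        | (refine adjL _ _ (-2) hxy ?_; rw [← zpow_mul]; norm_num; done)
        | (refine adjR _ _ (-2) hxy ?_; rw [← zpow_mul]; norm_num; done)
  · have n0 : a ^ (0:ℤ) ∉ ({a ^ (1:ℤ), a ^ (-1:ℤ), a ^ (2:ℤ), a ^ (-2:ℤ)} : Finset G) := by
      simp only [Finset.mem_insert, Finset.mem_singleton, not_or]
      refine ⟨?_, ?_, ?_, ?_⟩ <;> (apply hne <;> norm_num)
    have n1 : a ^ (1:ℤ) ∉ ({a ^ (-1:ℤ), a ^ (2:ℤ), a ^ (-2:ℤ)} : Finset G) := by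
      simp only [Finset.mem_insert, Finset.mem_singleton, not_or]
      refine ⟨?_, ?_, ?_⟩ <;> (apply hne <;> norm_num)
    have n2 : a ^ (-1:ℤ) ∉ ({a ^ (2:ℤ), a ^ (-2:ℤ)} : Finset G) := by
      simp only [Finset.mem_insert, Finset.mem_singleton, not_or]
      refine ⟨?_, ?_⟩ <;> (apply hne <;> norm_num)
    have n3 : a ^ (2:ℤ) ∉ ({a ^ (-2:ℤ)} : Finset G) := by
      simp only [Finset.mem_singleton]
      apply hne <;> norm_num
    rw [Finset.card_insert_of_notMem n0, Finset.card_insert_of_notMem n1,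
      Finset.card_insert_of_notMem n2, Finset.card_insert_of_notMem n3,
      Finset.card_singleton]
end

section
/- Let G be a finite group with more than 2 elements (Nat.card G > 2). Then the girth of the endomorphism graph Endo(G) equals 3, i.e., (Endo(G)).girth = 3. -/
private lemma exists_endo_pair (G : Type*) [Group G] [Finite G] (h : Nat.card G > 2) :
    ∃ a b : G, a ≠ 1 ∧ b ≠ 1 ∧ a ≠ b ∧ ∃ f : G →* G, f a = b := by
  by_cases hcomm : ∀ x y : G, x * y = y * x
  · by_cases hsq : ∀ x : G, x * x = 1
    · -- elementary abelian 2-group case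
      letI : CommGroup G := { mul_comm := hcomm }
      -- pick a ≠ 1
      have h1 : Nontrivial G := Finite.one_lt_card_iff_nontrivial.mp (by omega)
      obtain ⟨a, ha⟩ := exists_ne (1 : G)
      -- pick b ∉ {1, a}
      have hb : ∃ b : G, b ≠ 1 ∧ b ≠ a := by
        by_contra hb
        push_neg at hb
        have : (Set.univ : Set G) ⊆ {1, a} := by
          intro x _
          rcases eq_or_ne x 1 with h1 | h1
          · exact Or.inl h1
          · exact Or.inr (hb x h1)
        have hle := Set.ncard_le_ncard this (Set.toFinite _)
        rw [Set.ncard_univ] at hle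
        have h2 : ({1, a} : Set G).ncard ≤ 2 := (Set.ncard_insert_le _ _).trans (by simp)
        omega
      obtain ⟨b, hb1, hba⟩ := hb
      -- module structure over ZMod 2 on Additive G
      letI : Module (ZMod 2) (Additive G) :=
        AddCommMonoid.zmodModule (by
          intro x
          show (2 : ℕ) • x = 0
          rw [two_nsmul]
          exact hsq x.toMul)
      -- find a functional φ with φ a ≠ 0
      have ha' : (Additive.ofMul a : Additive G) ≠ 0 := ha
      have : ¬ ∀ φ : Module.Dual (ZMod 2) (Additive G), φ (Additive.ofMul a) = 0 := by
        rw [Module.forall_dual_apply_eq_zero_iff]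
        exact ha'
      push_neg at this
      obtain ⟨φ, hφ⟩ := this
      -- define f x = if φ x = 0 then 1 else b
      have hbb : b * b = 1 := hsq b
      refine ⟨a, b, ha, hb1, fun hh => hba hh.symm, ⟨⟨⟨fun x =>
        if φ (Additive.ofMul x) = 0 then 1 else b, ?_⟩, ?_⟩, ?_⟩⟩
      · simp
      · intro x y
        simp only [MonoidHom.coe_mk, OneHom.coe_mk]
        have hxy : φ (Additive.ofMul (x * y)) =
            φ (Additive.ofMul x) + φ (Additive.ofMul y) := map_add φ _ _
        rcases eq_or_ne (φ (Additive.ofMul x)) 0 with hx | hx <;>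
          rcases eq_or_ne (φ (Additive.ofMul y)) 0 with hy | hy
        · simp [hxy, hx, hy]
        · simp [hxy, hx, hy]
        · simp [hxy, hx, hy]
        · have key : ∀ u : ZMod 2, u ≠ 0 → u = 1 := by decide
          have hz : φ (Additive.ofMul (x * y)) = 0 := by
            rw [hxy, key _ hx, key _ hy]; decide
          rw [if_pos hz, if_neg hx, if_neg hy]
          exact hbb.symm
      · simp [hφ]
    · -- abelian with an element of order > 2: use inversion
      push_neg at hsq
      obtain ⟨a, ha2⟩ := hsq
      letI : CommGroup G := { mul_comm := hcomm }
      have ha : a ≠ 1 := by rintro rfl; simp at ha2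
      have hinv1 : a⁻¹ ≠ 1 := inv_ne_one.mpr ha
      have hne : a ≠ a⁻¹ := fun hh => ha2 (eq_inv_iff_mul_eq_one.mp hh)
      exact ⟨a, a⁻¹, ha, hinv1, hne, invMonoidHom, rfl⟩
  · -- nonabelian: use conjugation
    push_neg at hcomm
    obtain ⟨g, x, hgx⟩ := hcomm
    have hx1 : x ≠ 1 := by rintro rfl; simp at hgx
    have hc : g * x * g⁻¹ ≠ x := by
      intro hh
      apply hgx
      calc g * x = (g * x * g⁻¹) * g := by group
      _ = x * g := by rw [hh]
    have hc1 : g * x * g⁻¹ ≠ 1 := by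
      intro hh
      apply hx1
      have : x = g⁻¹ * 1 * g := by
        rw [← hh]; group
      simpa using this
    exact ⟨x, g * x * g⁻¹, hx1, hc1, fun hh => hc hh.symm,
      (MulAut.conj g).toMonoidHom, by simp [MulAut.conj]⟩

/-- If a finite group `G` has more than two elements, then the girth of its endomorphism graph
is `3`. -/
theorem endoGraph_girth_eq_three (G : Type*) [Group G] [Finite G] (h : Nat.card G > 2) :
    (endoGraph G).girth = 3 := by
  obtain ⟨a, b, ha, hb, hab, f, hf⟩ := exists_endo_pair G h
  -- adjacency facts
  have adj1a : (endoGraph G).Adj 1 a :=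
    ⟨ha.symm, Or.inr ⟨1, rfl⟩⟩
  have adjab : (endoGraph G).Adj a b := ⟨hab, Or.inl ⟨f, hf⟩⟩
  have adjb1 : (endoGraph G).Adj b 1 := ⟨hb, Or.inl ⟨1, rfl⟩⟩
  -- build the triangle
  let p : (endoGraph G).Walk a 1 :=
    SimpleGraph.Walk.cons adjab (SimpleGraph.Walk.cons adjb1 SimpleGraph.Walk.nil)
  let w : (endoGraph G).Walk 1 1 := SimpleGraph.Walk.cons adj1a p
  have hw : w.IsCycle := by
    rw [SimpleGraph.Walk.cons_isCycle_iff]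
    constructor
    · rw [SimpleGraph.Walk.cons_isPath_iff]
      refine ⟨SimpleGraph.Walk.IsPath.cons (SimpleGraph.Walk.IsPath.nil) ?_, ?_⟩
      · simpa using hb
      · simp [hab, ha]
    · intro hmem
      simp only [p, SimpleGraph.Walk.edges_cons, SimpleGraph.Walk.edges_nil, List.mem_cons,
        List.not_mem_nil, or_false] at hmem
      rcases hmem with h1 | h1 <;> rw [Sym2.eq_iff] at h1 <;>
        rcases h1 with ⟨h2, h3⟩ | ⟨h2, h3⟩ <;>
        first
        | exact ha h2.symm
        | exact hb h2.symm
        | exact ha h3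
        | exact hab h3
  have hlen : w.length = 3 := rfl
  have hle : (endoGraph G).egirth ≤ 3 := by
    calc (endoGraph G).egirth ≤ (w.length : ℕ∞) := by
          refine iInf_le_of_le 1 (iInf_le_of_le w (iInf_le_of_le hw le_rfl))
    _ = 3 := by rw [hlen]; rfl
  have hge : 3 ≤ (endoGraph G).egirth := SimpleGraph.three_le_egirth
  have : (endoGraph G).egirth = 3 := le_antisymm hle hge
  rw [SimpleGraph.girth, this]
  rfl
end

section
/- Let G be a finite nontrivial group. The endomorphism graph Endo(G) is bipartite (i.e., 2-colorable, (Endo(G)).Colorable 2) if and only if G has exactly 2 elements (Nat.card G = 2). -/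
lemma exists_ne_ne_of_two_lt_natCard {α : Type*} (h : 2 < Nat.card α) (x : α) :
    ∃ a b : α, a ≠ x ∧ b ≠ x ∧ a ≠ b := by
  have hx : ({x} : Set α).ncard < (Set.univ : Set α).ncard := by
    rw [Set.ncard_singleton, Set.ncard_univ]; omega
  obtain ⟨a, -, ha⟩ := Set.exists_mem_notMem_of_ncard_lt_ncard hx
  have hxa : ({x, a} : Set α).ncard < (Set.univ : Set α).ncard := by
    rw [Set.ncard_univ]; exact (Set.ncard_insert_le x {a}).trans_lt (by simpa using h)
  obtain ⟨b, -, hb⟩ := Set.exists_mem_notMem_of_ncard_lt_ncard hxa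
  simp only [Set.mem_insert_iff, Set.mem_singleton_iff, not_or] at ha hb
  exact ⟨a, b, ha, hb.1, Ne.symm hb.2⟩

lemma CommGroup.exists_monoidHom_apply_eq_of_mul_self_eq_one {G : Type*} [CommGroup G]
    (hG : ∀ x : G, x * x = 1) {a : G} (ha : a ≠ 1) (b : G) : ∃ f : G →* G, f a = b := by
  let : Module (ZMod 2) (Additive G) :=
    AddCommGroup.zmodModule fun x => (two_nsmul x).trans (hG x.toMul)
  obtain ⟨φ, hφ⟩ := Module.Projective.exists_dual_eq_one (ZMod 2) (x := Additive.ofMul a) ha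
  refine ⟨MonoidHom.toAdditive.symm (φ.smulRight (Additive.ofMul b)).toAddMonoidHom, ?_⟩
  simp [hφ]

namespace endoGraph

variable {G : Type*} [Group G]

lemma adj_of_apply_eq {a b : G} (hab : a ≠ b) (f : G →* G) (hf : f a = b) :
    (endoGraph G).Adj a b :=
  ⟨hab, Or.inl ⟨f, hf⟩⟩

lemma adj_one {a : G} (ha : a ≠ 1) : (endoGraph G).Adj a 1 :=
  adj_of_apply_eq ha 1 rfl

lemma not_colorable_two_of_adj {a b : G} (ha : a ≠ 1) (hb : b ≠ 1)
    (hab : (endoGraph G).Adj a b) :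
    ¬ (endoGraph G).Colorable 2 := by
  classical
  exact fun hc => hc.cliqueFree (m := 3) (by norm_num) {1, a, b}
    (SimpleGraph.is3Clique_triple_iff.2 ⟨(adj_one ha).symm, (adj_one hb).symm, hab⟩)

lemma exists_adj_of_two_lt_natCard (h : 2 < Nat.card G) :
    ∃ a b : G, a ≠ 1 ∧ b ≠ 1 ∧ (endoGraph G).Adj a b := by
  by_cases hσ : ∃ (σ : G ≃* G) (a : G), σ a ≠ a
  · obtain ⟨σ, a, ha⟩ := hσ
    refine ⟨a, σ a, fun h1 => ha (by simp [h1]), fun h1 => ha (by simp_all), ?_⟩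
    exact adj_of_apply_eq (Ne.symm ha) σ.toMonoidHom rfl
  · push Not at hσ
    let : CommGroup G :=
      { mul_comm := fun g x => by simpa using congrArg (· * g) (hσ (MulAut.conj g) x) }
    have hsq : ∀ x : G, x * x = 1 := fun x =>
      mul_eq_one_iff_eq_inv.2 (hσ (MulEquiv.inv G) x).symm
    obtain ⟨a, b, ha, hb, hab⟩ := exists_ne_ne_of_two_lt_natCard h (1 : G)
    obtain ⟨f, hf⟩ := CommGroup.exists_monoidHom_apply_eq_of_mul_self_eq_one hsq ha b
    exact ⟨a, b, ha, hb, adj_of_apply_eq hab f hf⟩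

end endoGraph

/-- The endomorphism graph of a finite nontrivial group `G` is bipartite iff `G` has exactly
two elements. -/
theorem endoGraph_colorable_two_iff (G : Type*) [Group G] [Finite G] [Nontrivial G] :
    (endoGraph G).Colorable 2 ↔ Nat.card G = 2 := by
  have : Fintype G := Fintype.ofFinite G
  constructor
  · intro hcol
    by_contra hne
    have h2 : 2 < Nat.card G := by have := Finite.one_lt_card (α := G); omega
    obtain ⟨a, b, ha, hb, hab⟩ := endoGraph.exists_adj_of_two_lt_natCard h2
    exact endoGraph.not_colorable_two_of_adj ha hb hab hcol
  · intro hcard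
    rw [← hcard, Nat.card_eq_fintype_card]
    exact (endoGraph G).colorable_of_fintype
end

section
/- Let G be a finite nontrivial group. The endomorphism graph Endo(G) is a tree, i.e., (Endo(G)).IsTree, if and only if G has exactly 2 elements (Nat.card G = 2). -/
section helpers
variable {G : Type*} [Group G]

lemma endoGraph_adj_one {a : G} (ha : a ≠ 1) : (endoGraph G).Adj a 1 := by
  simp only [endoGraph, SimpleGraph.fromRel_adj]
  exact ⟨ha, Or.inl ⟨1, rfl⟩⟩

lemma exists_endo_of_exp_two (hcomm : ∀ x y : G, x * y = y * x)
    (hsq : ∀ x : G, x * x = 1) {a b : G} (ha : a ≠ 1) :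
    ∃ f : G →* G, f a = b := by
  letI : CommGroup G := { ‹Group G› with mul_comm := hcomm }
  letI : Module (ZMod 2) (Additive G) := AddCommGroup.zmodModule (by
    intro x; rw [two_nsmul]; exact hsq x)
  have ha' : (Additive.ofMul a : Additive G) ≠ 0 := ha
  have hd : ¬ ∀ φ : Module.Dual (ZMod 2) (Additive G), φ (Additive.ofMul a) = 0 := by
    rw [Module.forall_dual_apply_eq_zero_iff]; exact ha'
  push_neg at hd
  obtain ⟨φ, hφ⟩ := hd
  have hφ1 : φ (Additive.ofMul a) = 1 := by
    have : ∀ z : ZMod 2, z ≠ 0 → z = 1 := by decide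
    exact this _ hφ
  set c : G := a * b with hc
  have hcc : c * c = 1 := hsq c
  have hc2 : c ^ (2:ℕ) = 1 := by rw [pow_two]; exact hcc
  have ht : ∀ u v : ZMod 2, c ^ (u + v).val = c ^ u.val * c ^ v.val := by
    intro u v
    rw [ZMod.val_add, ← pow_eq_pow_mod _ hc2, pow_add]
  refine ⟨{ toFun := fun x => x * c ^ (φ (Additive.ofMul x)).val, map_one' := ?_,
            map_mul' := ?_ }, ?_⟩
  · simp [show φ (Additive.ofMul (1 : G)) = 0 from map_zero φ]
  · intro x y
    have : φ (Additive.ofMul (x * y)) =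
        φ (Additive.ofMul x) + φ (Additive.ofMul y) := map_add φ _ _
    simp only [this, ht]
    rw [mul_mul_mul_comm]
  · show a * c ^ (φ (Additive.ofMul a)).val = b
    rw [hφ1]
    have h1 : (1 : ZMod 2).val = 1 := rfl
    rw [h1, pow_one, hc, ← mul_assoc, hsq a, one_mul]

lemma exists_adj_pair [Finite G] (h3 : 3 ≤ Nat.card G) :
    ∃ a b : G, a ≠ 1 ∧ b ≠ 1 ∧ a ≠ b ∧ ∃ f : G →* G, f a = b := by
  classical
  letI := Fintype.ofFinite G
  haveI : Nontrivial G := Finite.one_lt_card_iff_nontrivial.mp (by omega)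
  by_cases hcomm : ∀ x y : G, x * y = y * x
  · by_cases hsq : ∀ x : G, x * x = 1
    · obtain ⟨a, ha⟩ := exists_ne (1 : G)
      have : ∃ b : G, b ≠ 1 ∧ b ≠ a := by
        by_contra h
        push_neg at h
        have hsub : (Finset.univ : Finset G) ⊆ {1, a} := by
          intro b _
          rcases eq_or_ne b 1 with rfl | hb
          · simp
          · simp [h b hb]
        have := Finset.card_le_card hsub
        have hcard : Fintype.card G = Nat.card G := (Nat.card_eq_fintype_card).symm
        have : Nat.card G ≤ 2 := by
          calc Nat.card G = Fintype.card G := Nat.card_eq_fintype_card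
            _ ≤ ({1, a} : Finset G).card := by simpa [Finset.card_univ] using Finset.card_le_card hsub
            _ ≤ 2 := Finset.card_insert_le _ _ |>.trans (by simp)
        omega
      obtain ⟨b, hb, hba⟩ := this
      exact ⟨a, b, ha, hb, hba.symm, exists_endo_of_exp_two hcomm hsq ha⟩
    · push_neg at hsq
      obtain ⟨a, ha2⟩ := hsq
      have ha : a ≠ 1 := by rintro rfl; simp at ha2
      have hainv : a⁻¹ ≠ 1 := by simp [ha]
      have hne : a ≠ a⁻¹ := by
        intro h
        apply ha2
        nth_rewrite 2 [h]
        simp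
      letI : CommGroup G := { ‹Group G› with mul_comm := hcomm }
      exact ⟨a, a⁻¹, ha, hainv, hne, ⟨invMonoidHom, rfl⟩⟩
  · push_neg at hcomm
    obtain ⟨g, x, hgx⟩ := hcomm
    refine ⟨x, g * x * g⁻¹, ?_, ?_, ?_, (MulAut.conj g).toMonoidHom, by simp [MulAut.conj]⟩
    · rintro rfl; simp at hgx
    · intro h
      have : x = 1 := by
        have := congrArg (fun y => g⁻¹ * y * g) h
        simpa [mul_assoc] using this
      rw [this] at hgx; simp at hgx
    · intro h
      apply hgx
      nth_rewrite 2 [h]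
      group

end helpers

/-- The endomorphism graph of a finite nontrivial group `G` is a tree iff `G` has exactly two
elements. -/
theorem endoGraph_isTree_iff (G : Type*) [Group G] [Finite G] [Nontrivial G] :
    (endoGraph G).IsTree ↔ Nat.card G = 2 := by
  classical
  letI := Fintype.ofFinite G
  have hcard : Fintype.card G = Nat.card G := Nat.card_eq_fintype_card.symm
  constructor
  · intro htree
    by_contra hne
    have h2 : 1 < Nat.card G := Finite.one_lt_card
    have h3 : 3 ≤ Nat.card G := by omega
    obtain ⟨a, b, ha, hb, hab, f, hf⟩ := exists_adj_pair h3
    have hadj : (endoGraph G).Adj a b := by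
      simp only [endoGraph, SimpleGraph.fromRel_adj]
      exact ⟨hab, Or.inl ⟨f, hf⟩⟩
    have h1a : (endoGraph G).Adj 1 a := (endoGraph_adj_one ha).symm
    have hb1 : (endoGraph G).Adj b 1 := endoGraph_adj_one hb
    let p : (endoGraph G).Walk a 1 := .cons hadj (.cons hb1 .nil)
    have hcyc : (SimpleGraph.Walk.cons h1a p).IsCycle := by
      rw [SimpleGraph.Walk.cons_isCycle_iff]
      constructor
      · rw [SimpleGraph.Walk.isPath_def]
        simp [p, hab, ha, hb]
      · simp [p, Sym2.eq, Sym2.rel_iff', ha.symm, hab, Ne.symm hb]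
    exact htree.IsAcyclic _ hcyc
  · intro h2
    constructor
    · refine SimpleGraph.Connected.mk ?_
      intro u v
      rcases eq_or_ne u v with rfl | huv
      · exact SimpleGraph.Reachable.refl u
      · rcases eq_or_ne u 1 with rfl | hu
        · have hv : v ≠ 1 := fun h => huv h.symm
          exact ((endoGraph_adj_one hv).symm).reachable
        · rcases eq_or_ne v 1 with rfl | hv
          · exact (endoGraph_adj_one hu).reachable
          · exfalso
            have hsub : ({1, u, v} : Finset G).card ≤ Fintype.card G :=
              Finset.card_le_univ _
            have hc3 : ({1, u, v} : Finset G).card = 3 := by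
              rw [Finset.card_insert_of_notMem (by simp [Ne.symm hu, Ne.symm hv]),
                Finset.card_pair huv]
            omega
    · intro v c hc
      have h3 := hc.three_le_length
      have hnodup := hc.support_nodup
      have hlen : c.support.tail.length = c.length := by
        have := SimpleGraph.Walk.length_support c
        simp [List.length_tail, this]
      have := hnodup.length_le_card
      omega
end

section
/- Let G be a finite nontrivial group and let Endo(G*) denote the subgraph of the endomorphism graph Endo(G) induced on the set {g : G | g ≠ 1} of non-identity elements. Then Endo(G*) is a tree if and only if Nat.card G = 2 or Nat.card G = 3 (i.e., G is isomorphic to ℤ₂ or ℤ₃). -/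
/-!
A tree has no triangle, so for `|G| ≥ 4` it suffices to find three pairwise adjacent
non-identity elements, while for `|G| ∈ {2, 3}` the graph is complete on at most two vertices.

If some `x` has three distinct conjugates, inner automorphisms join them pairwise. If every
element has at most two conjugates but `u` and `g` do not commute, the commutator `z = ⁅g, u⁆` is
an involution and the centralizer of `g` has index two; the endomorphism sending the complement of
that centralizer to `z` joins both `u` and `g u g⁻¹` to `z`. In an abelian group an element `x` of
order at least four gives the triangle `x, x⁻¹, x²` through power maps; otherwise the exponent is
a prime `p`, so `G` is an `𝔽_p`-vector space and a linear map sends any non-identity element to any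
other element, which makes the graph complete.
-/

open scoped commutatorElement

namespace SimpleGraph

variable {V : Type*}

theorem not_cliqueFree_induce_three {Γ : SimpleGraph V} {s : Set V} {a b c : V}
    (ha : a ∈ s) (hb : b ∈ s) (hc : c ∈ s) (hab : Γ.Adj a b) (hac : Γ.Adj a c)
    (hbc : Γ.Adj b c) : ¬(Γ.induce s).CliqueFree 3 := by
  classical
  rw [cliqueFree_induce_iff]
  exact fun h ↦ h (by simp [Set.insert_subset_iff, ha, hb, hc])
    (is3Clique_triple_iff.2 ⟨hab, hac, hbc⟩)

theorem not_cliqueFree_top_three [Finite V] (h : 2 < Nat.card V) :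
    ¬(⊤ : SimpleGraph V).CliqueFree 3 := by
  classical
  have := Fintype.ofFinite V
  rw [Nat.card_eq_fintype_card, Fintype.two_lt_card_iff] at h
  obtain ⟨a, b, c, hab, hac, hbc⟩ := h
  exact fun hV ↦ hV {a, b, c} (is3Clique_triple_iff.2 ⟨hab, hac, hbc⟩)

theorem isTree_top_of_card_le_two [Finite V] [Nonempty V] (h : Nat.card V ≤ 2) :
    (⊤ : SimpleGraph V).IsTree :=
  ⟨connected_top, .of_card_le_two <| by rw [ENat.card_eq_coe_natCard]; exact_mod_cast h⟩

end SimpleGraph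

theorem Set.natCard_ne_add_one {α : Type*} [Finite α] (a : α) :
    Nat.card {x : α | x ≠ a} + 1 = Nat.card α := by
  have := Set.encard_ne_add_one a
  rw [Set.encard, ENat.card_eq_coe_natCard, ENat.card_eq_coe_natCard] at this
  exact_mod_cast this

theorem CommGroup.exists_monoidHom_apply_eq {G : Type*} [CommGroup G] {p : ℕ}
    (hp : p.Prime) (hG : ∀ g : G, g ^ p = 1) {x : G} (hx : x ≠ 1) (y : G) :
    ∃ f : G →* G, f x = y := by
  have := Fact.mk hp
  let : Module (ZMod p) (Additive G) := AddCommGroup.zmodModule (n := p) fun g ↦ hG g.toMul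
  obtain ⟨φ, hφ⟩ := Module.Projective.exists_dual_eq_one (ZMod p)
    (x := Additive.ofMul x) (by simpa using hx)
  exact ⟨MonoidHom.toAdditive.symm (φ.smulRight (Additive.ofMul y)).toAddMonoidHom, by simp [hφ]⟩

namespace Subgroup

variable {G : Type*} [Group G]

open scoped Classical in
noncomputable def indexTwoHom (H : Subgroup G) (hH : H.index = 2) (z : G) (hz : z * z = 1) :
    G →* G :=
  MonoidHom.mk' (fun t ↦ if t ∈ H then 1 else z) fun a b ↦ by
    simp only [mul_mem_iff_of_index_two hH]
    split_ifs <;> simp_all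

theorem indexTwoHom_apply_of_notMem {H : Subgroup G} (hH : H.index = 2) {z : G}
    (hz : z * z = 1) {t : G} (ht : t ∉ H) : H.indexTwoHom hH z hz t = z := by
  simp [indexTwoHom, ht]

end Subgroup

section Group

variable {G : Type*} [Group G]

theorem conj_eq_self_iff_commute {g x : G} : g * x * g⁻¹ = x ↔ Commute g x :=
  mul_inv_eq_iff_eq_mul

theorem endoGraph_adj_of_apply_eq (f : G →* G) {a b : G} (hf : f a = b) (hab : a ≠ b) :
    (endoGraph G).Adj a b :=
  (SimpleGraph.fromRel_adj _ _ _).2 ⟨hab, .inl ⟨f, hf⟩⟩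

theorem endoGraph_not_cliqueFree_of_three_conjugates {x a b : G} (ha : a * x * a⁻¹ ≠ x)
    (hb : b * x * b⁻¹ ≠ x) (hab : a * x * a⁻¹ ≠ b * x * b⁻¹) :
    ¬((endoGraph G).induce {g : G | g ≠ 1}).CliqueFree 3 := by
  have hx : x ≠ 1 := by rintro rfl; simp at ha
  refine SimpleGraph.not_cliqueFree_induce_three (a := x) (b := a * x * a⁻¹) (c := b * x * b⁻¹)
    hx (by simpa using hx) (by simpa using hx)
    (endoGraph_adj_of_apply_eq (MulAut.conj a) rfl ha.symm)
    (endoGraph_adj_of_apply_eq (MulAut.conj b) rfl hb.symm)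
    (endoGraph_adj_of_apply_eq (MulAut.conj (b * a⁻¹)) ?_ hab)
  simp only [MonoidHom.coe_coe, MulAut.conj_apply]
  group

def AtMostTwoConjugates (G : Type*) [Group G] : Prop :=
  ∀ x a b : G, a * x * a⁻¹ ≠ x → b * x * b⁻¹ ≠ x → a * x * a⁻¹ = b * x * b⁻¹

namespace AtMostTwoConjugates

theorem conj_conj_eq_self (hG : AtMostTwoConjugates G) {g u : G} (hgu : g * u * g⁻¹ ≠ u) :
    g * (g * u * g⁻¹) * g⁻¹ = u := by
  by_contra h
  have hsq := hG u g (g * g) hgu (by convert h using 1; group)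
  refine hgu ((MulAut.conj g).injective ?_).symm
  simp only [MulAut.conj_apply]
  exact hsq.trans (by group)

theorem commute_conj_self (hG : AtMostTwoConjugates G) (g u : G) :
    Commute (g * u * g⁻¹) u := by
  by_cases hgu : g * u * g⁻¹ = u
  · rw [hgu]
  by_contra h
  have hcu := (hG u g _ hgu (mt conj_eq_self_iff_commute.1 h)).symm
  exact hgu (mul_left_cancel (mul_inv_eq_iff_eq_mul.1 hcu)).symm

theorem commutatorElement_mul_self (hG : AtMostTwoConjugates G) (g u : G) :
    ⁅g, u⁆ * ⁅g, u⁆ = 1 := by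
  by_cases hgu : g * u * g⁻¹ = u
  · simp [commutatorElement_def, hgu]
  have hinv : g * ⁅g, u⁆ * g⁻¹ = ⁅g, u⁆⁻¹ := by
    calc g * ⁅g, u⁆ * g⁻¹ = g * (g * u * g⁻¹) * g⁻¹ * (g * u * g⁻¹)⁻¹ := by
          rw [commutatorElement_def]; group
      _ = ⁅g, u⁆⁻¹ := by rw [conj_conj_eq_self hG hgu, commutatorElement_def]; group
  have hfix : g * ⁅g, u⁆ * g⁻¹ = ⁅g, u⁆ := by
    have := conj_eq_self_iff_commute.2 (commute_conj_self hG u g).inv_left.symm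
    calc g * ⁅g, u⁆ * g⁻¹ = g * (g * (u * g * u⁻¹)⁻¹ * g⁻¹) := by
          rw [commutatorElement_def]; group
      _ = ⁅g, u⁆ := by rw [this, commutatorElement_def]; group
  exact mul_eq_one_iff_eq_inv.2 (hfix.symm.trans hinv)

theorem mul_mem_centralizer (hG : AtMostTwoConjugates G) {g s t : G}
    (hs : s ∉ Subgroup.centralizer {g}) (ht : t ∉ Subgroup.centralizer {g}) :
    s * t ∈ Subgroup.centralizer {g} := by
  have hmem (k : G) : k ∈ Subgroup.centralizer {g} ↔ k * g * k⁻¹ = g := by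
    rw [Subgroup.mem_centralizer_singleton_iff, conj_eq_self_iff_commute]; rfl
  rw [← Subgroup.inv_mem_iff, hmem] at hs
  rw [hmem] at ht ⊢
  calc s * t * g * (s * t)⁻¹ = s * (t * g * t⁻¹) * s⁻¹ := by group
    _ = g := by rw [hG g t s⁻¹ ht hs]; group

theorem index_centralizer_eq_two (hG : AtMostTwoConjugates G) {g u : G}
    (hu : u ∉ Subgroup.centralizer {g}) : (Subgroup.centralizer {g}).index = 2 :=
  Subgroup.index_eq_two_iff_exists_notMem_and.2
    ⟨u, hu, fun _ ↦ or_iff_not_imp_right.2 (mul_mem_centralizer hG · hu)⟩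

theorem endoGraph_not_cliqueFree (hG : AtMostTwoConjugates G) {g u : G} (hug : ¬Commute u g) :
    ¬((endoGraph G).induce {g : G | g ≠ 1}).CliqueFree 3 := by
  set c := g * u * g⁻¹
  have hz : ⁅g, u⁆ = c * u⁻¹ := commutatorElement_def g u
  have hu : u ∉ Subgroup.centralizer {g} := by
    rwa [Subgroup.mem_centralizer_singleton_iff]
  have hc : c ∉ Subgroup.centralizer {g} := fun h ↦ hu <| by
    have hg : g ∈ Subgroup.centralizer {g} := Subgroup.mem_centralizer_singleton_iff.2 rfl
    simpa [c, mul_assoc] using mul_mem (mul_mem (inv_mem hg) h) hg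
  let f := (Subgroup.centralizer {g}).indexTwoHom (index_centralizer_eq_two hG hu) ⁅g, u⁆
    (commutatorElement_mul_self hG g u)
  have hcu : c ≠ u := fun h ↦ hug (conj_eq_self_iff_commute.1 h).symm
  have hu1 : u ≠ 1 := by rintro rfl; exact hug (Commute.one_left g)
  have hc1 : c ≠ 1 := by simpa [c] using hu1
  have hz1 : ⁅g, u⁆ ≠ 1 := by rwa [hz, Ne, mul_inv_eq_one]
  have hzu : ⁅g, u⁆ ≠ u := fun h ↦ hc1 <| by
    rw [← commutatorElement_mul_self hG g u]
    nth_rewrite 2 [h]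
    rw [hz, inv_mul_cancel_right]
  have hzc : ⁅g, u⁆ ≠ c := by simpa [hz] using hu1
  exact SimpleGraph.not_cliqueFree_induce_three hu1 hc1 hz1
    (endoGraph_adj_of_apply_eq (MulAut.conj g) rfl hcu.symm)
    (endoGraph_adj_of_apply_eq f (Subgroup.indexTwoHom_apply_of_notMem _ _ hu) hzu.symm)
    (endoGraph_adj_of_apply_eq f (Subgroup.indexTwoHom_apply_of_notMem _ _ hc) hzc.symm)

end AtMostTwoConjugates

theorem endoGraph_not_cliqueFree_of_not_commute {u g : G} (h : ¬Commute u g) :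
    ¬((endoGraph G).induce {g : G | g ≠ 1}).CliqueFree 3 := by
  by_cases hG : AtMostTwoConjugates G
  · exact hG.endoGraph_not_cliqueFree h
  · simp only [AtMostTwoConjugates, not_forall] at hG
    obtain ⟨x, a, b, ha, hb, hab⟩ := hG
    exact endoGraph_not_cliqueFree_of_three_conjugates ha hb hab

end Group

section CommGroup

variable {G : Type*} [CommGroup G]

theorem endoGraph_not_cliqueFree_of_four_le_orderOf {x : G} (hx : 4 ≤ orderOf x) :
    ¬((endoGraph G).induce {g : G | g ≠ 1}).CliqueFree 3 := by
  have hpow {k : ℕ} (hk0 : k ≠ 0) (hk : k < 4) : x ^ k ≠ 1 :=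
    pow_ne_one_of_lt_orderOf hk0 (by omega)
  have h1 : x ≠ 1 := by simpa using hpow one_ne_zero (by norm_num)
  have h2 : x ^ 2 ≠ 1 := hpow two_ne_zero (by norm_num)
  have h3 : x ^ 3 ≠ 1 := hpow three_ne_zero (by norm_num)
  refine SimpleGraph.not_cliqueFree_induce_three (a := x) (b := x⁻¹) (c := x ^ 2) h1
    (inv_ne_one.2 h1) h2 (endoGraph_adj_of_apply_eq invMonoidHom rfl ?_)
    (endoGraph_adj_of_apply_eq (powMonoidHom 2) rfl ?_)
    (endoGraph_adj_of_apply_eq ((powMonoidHom 2).comp invMonoidHom) (by simp) ?_)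
  · intro h; apply h2; rw [pow_two]; nth_rewrite 2 [h]; exact mul_inv_cancel x
  · intro h; apply h1; simpa [pow_two] using h
  · intro h; apply h3; rw [pow_succ, ← h, inv_mul_cancel]

theorem endoGraph_induce_eq_top {p : ℕ} (hp : p.Prime) (hG : ∀ g : G, g ^ p = 1) :
    (endoGraph G).induce {g : G | g ≠ 1} = ⊤ := by
  ext ⟨a, ha⟩ ⟨b, hb⟩
  simp only [SimpleGraph.comap_adj, Function.Embedding.subtype_apply, SimpleGraph.top_adj, ne_eq,
    Subtype.mk.injEq]
  refine ⟨fun h ↦ h.ne, fun hab ↦ ?_⟩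
  obtain ⟨f, hf⟩ := CommGroup.exists_monoidHom_apply_eq hp hG ha b
  exact endoGraph_adj_of_apply_eq f hf hab

theorem endoGraph_not_cliqueFree_of_comm [Finite G] (h4 : 4 ≤ Nat.card G) :
    ¬((endoGraph G).induce {g : G | g ≠ 1}).CliqueFree 3 := by
  have : Nontrivial G := Finite.one_lt_card_iff_nontrivial.1 (by omega)
  obtain ⟨x, hx⟩ := Monoid.exists_orderOf_eq_exponent Monoid.ExponentExists.of_finite (G := G)
  have he := Monoid.one_lt_exponent (G := G)
  by_cases he4 : 4 ≤ Monoid.exponent G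
  · exact endoGraph_not_cliqueFree_of_four_le_orderOf (hx ▸ he4)
  have hp : (Monoid.exponent G).Prime := by
    interval_cases Monoid.exponent G <;> norm_num
  rw [endoGraph_induce_eq_top hp Monoid.pow_exponent_eq_one]
  exact SimpleGraph.not_cliqueFree_top_three (by have := Set.natCard_ne_add_one (1 : G); omega)

end CommGroup

theorem endoGraph_not_cliqueFree_of_four_le_card {G : Type*} [Group G] [Finite G]
    (h4 : 4 ≤ Nat.card G) : ¬((endoGraph G).induce {g : G | g ≠ 1}).CliqueFree 3 := by
  by_cases hcomm : ∀ a b : G, Commute a b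
  · let : CommGroup G := { mul_comm := hcomm }
    exact endoGraph_not_cliqueFree_of_comm h4
  · push Not at hcomm
    obtain ⟨u, g, h⟩ := hcomm
    exact endoGraph_not_cliqueFree_of_not_commute h

theorem endoGraph_induce_isTree_of_prime_card {G : Type*} [Group G] [Finite G]
    (hp : (Nat.card G).Prime) (h3 : Nat.card G ≤ 3) :
    ((endoGraph G).induce {g : G | g ≠ 1}).IsTree := by
  have := Fact.mk hp
  let := @IsCyclic.commGroup G _ (isCyclic_of_prime_card rfl)
  have hV := Set.natCard_ne_add_one (1 : G)
  have : Nonempty {g : G | g ≠ 1} := (Nat.card_pos_iff.1 (by have := hp.two_le; omega)).1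
  rw [endoGraph_induce_eq_top hp fun _ ↦ pow_card_eq_one']
  exact SimpleGraph.isTree_top_of_card_le_two (by omega)

theorem endoGraph_deleted_isTree_iff_general (G : Type*) [Group G] [Finite G] :
    ((endoGraph G).induce {g : G | g ≠ 1}).IsTree ↔ Nat.card G = 2 ∨ Nat.card G = 3 := by
  refine ⟨fun hT ↦ ?_, fun h ↦ ?_⟩
  · obtain ⟨⟨g, hg⟩⟩ := hT.connected.nonempty
    have : 1 < Nat.card G := Finite.one_lt_card_iff_nontrivial.2 ⟨⟨g, 1, hg⟩⟩
    by_contra hne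
    exact endoGraph_not_cliqueFree_of_four_le_card (by omega) (hT.isAcyclic.cliqueFree le_rfl)
  · refine endoGraph_induce_isTree_of_prime_card ?_ (by omega)
    rcases h with h | h <;> rw [h] <;> norm_num

/-- The identity-deleted endomorphism graph `Endo(G*)` of a finite nontrivial group `G` is a
tree iff `G` has exactly two or exactly three elements. -/
theorem endoGraph_deleted_isTree_iff (G : Type*) [Group G] [Finite G] [Nontrivial G] :
    ((endoGraph G).induce {g : G | g ≠ 1}).IsTree ↔ Nat.card G = 2 ∨ Nat.card G = 3 :=
  endoGraph_deleted_isTree_iff_general G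
end
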